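/- Let λ be a Young diagram with inner corners In(λ) (boxes c ∉ λ with λ ∪ c a Young diagram) and outer corners Out(λ). Assume the monomials z_c = t^{i(c)} q^{j(c)} for c ranging over In(λ) ∪ Out(λ) are pairwise distinct in ℚ(q,t). Then ∑_{c ∈ In(λ)} f_{λ,c} = 1, where f_{λ,c} := (∏_{d ∈ Out(λ)} (z_c - z_d)) / (∏_{e ∈ In(λ), e ≠ c} (z_c - z_e)). -/

import Mathlib

open MvPolynomial

/-- A box `c ∉ λ` is an inner corner if `λ ∪ {c}` is again a Young diagram. -/
def IsInnerCorner (μ : YoungDiagram) (c : ℕ × ℕ) : Prop :=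
  c ∉ μ.cells ∧ IsLowerSet (insert c (μ.cells : Set (ℕ × ℕ)))

/-- A box `c ∉ λ` with both coordinates positive is an outer corner if the diagonally
adjacent box `c - (1,1)` is a removable box of `λ`. -/
def IsOuterCorner (μ : YoungDiagram) (c : ℕ × ℕ) : Prop :=
  c ∉ μ.cells ∧ 1 ≤ c.1 ∧ 1 ≤ c.2 ∧ (c.1 - 1, c.2 - 1) ∈ μ.cells ∧
    IsLowerSet ((μ.cells.erase (c.1 - 1, c.2 - 1) : Finset (ℕ × ℕ)) : Set (ℕ × ℕ))

noncomputable def zbox (c : ℕ × ℕ) : FractionRing (MvPolynomial (Fin 2) ℚ) :=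
  algebraMap (MvPolynomial (Fin 2) ℚ) _ ((X 0) ^ c.2 * (X 1) ^ c.1)


/-!
The sum is the Lagrange interpolation formula for the leading coefficient of
`∏_{d ∈ Out(λ)} (X - z_d)` at the nodes `z_c`, `c ∈ In(λ)`. It applies because this monic
polynomial has degree `|Out(λ)| = |In(λ)| - 1`: every row `i ≥ 1` of `λ` whose length drops
has exactly one inner corner `(i, λ_i)` and one outer corner `(i, λ_{i-1})`, while row `0`
carries one more inner corner.
-/

open Finset

lemma sum_prod_sub_div_prod_erase_sub_eq_one {F ι : Type*} [Field F] [DecidableEq ι]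
    {A B : Finset ι} {v : ι → F} (hv : Set.InjOn v A) (hcard : #A = #B + 1) :
    ∑ i ∈ A, (∏ j ∈ B, (v i - v j)) / ∏ k ∈ A.erase i, (v i - v k) = 1 := by
  have h := Lagrange.leadingCoeff_eq_sum hv (P := Lagrange.nodal B v)
    (by rw [Lagrange.degree_nodal, hcard]; norm_cast)
  simpa [Lagrange.eval_nodal, Lagrange.nodal_monic.leadingCoeff] using h.symm

lemma isLowerSet_insert_iff {α : Type*} [PartialOrder α] {s : Set α} {a : α}
    (hs : IsLowerSet s) : IsLowerSet (insert a s) ↔ ∀ b < a, b ∈ s := by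
  refine ⟨fun h b hb => ?_, fun h b c hcb hb => ?_⟩
  · exact (h hb.le (Set.mem_insert a s)).resolve_left hb.ne
  · rcases hb with rfl | hb
    · exact hcb.eq_or_lt.imp id (h c)
    · exact Or.inr (hs hcb hb)

lemma isLowerSet_diff_singleton_iff {α : Type*} [PartialOrder α] {s : Set α} {a : α}
    (hs : IsLowerSet s) : IsLowerSet (s \ {a}) ↔ ∀ b ∈ s, a ≤ b → b = a := by
  refine ⟨fun h b hb hab => ?_, hs.erase⟩
  by_contra hba
  exact (h hab ⟨hb, hba⟩).2 rfl

namespace YoungDiagram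

variable (μ : YoungDiagram)

lemma isInnerCorner_iff_rowLen (i j : ℕ) :
    IsInnerCorner μ (i, j) ↔ j = μ.rowLen i ∧ (i = 0 ∨ μ.rowLen i < μ.rowLen (i - 1)) := by
  rw [IsInnerCorner, isLowerSet_insert_iff μ.isLowerSet, mem_cells, mem_iff_lt_rowLen]
  constructor
  · rintro ⟨hj, hlt⟩
    have hrow : j ≠ 0 → j - 1 < μ.rowLen i := fun h =>
      mem_iff_lt_rowLen.mp (hlt (i, j - 1) (by simp [Prod.lt_iff]; omega))
    have hcol : i ≠ 0 → j < μ.rowLen (i - 1) := fun h =>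
      mem_iff_lt_rowLen.mp (hlt (i - 1, j) (by simp [Prod.lt_iff]; omega))
    omega
  · rintro ⟨rfl, hi⟩
    refine ⟨lt_irrefl _, fun ⟨a, b⟩ hab => mem_iff_lt_rowLen.mpr ?_⟩
    simp only [Prod.lt_iff] at hab
    by_cases ha : a = i
    · subst ha; omega
    · have := μ.rowLen_anti a (i - 1) (by omega)
      omega

lemma isOuterCorner_iff_rowLen (i j : ℕ) :
    IsOuterCorner μ (i, j) ↔ i ≠ 0 ∧ j = μ.rowLen (i - 1) ∧ μ.rowLen i < μ.rowLen (i - 1) := by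
  rw [IsOuterCorner, Finset.coe_erase, isLowerSet_diff_singleton_iff μ.isLowerSet]
  simp only [mem_cells, mem_iff_lt_rowLen]
  constructor
  · rintro ⟨hj, hi1, hj1, hlt, hmax⟩
    have hrow : ¬ j < μ.rowLen (i - 1) := fun h => by
      have := hmax (i - 1, j) (mem_iff_lt_rowLen.mpr h) (by simp)
      simp only [Prod.mk.injEq, true_and] at this
      omega
    have hcol : ¬ j - 1 < μ.rowLen i := fun h => by
      have := hmax (i, j - 1) (mem_iff_lt_rowLen.mpr h) (by simp)
      simp only [Prod.mk.injEq, and_true] at this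
      omega
    omega
  · rintro ⟨hi, rfl, hlt⟩
    refine ⟨by omega, by omega, by omega, by omega, fun ⟨a, b⟩ hab hle => ?_⟩
    rw [Finset.mem_coe, mem_cells, mem_iff_lt_rowLen] at hab
    simp only [Prod.mk_le_mk] at hle
    have := μ.rowLen_anti (i - 1) a hle.1
    have : a < i := by
      by_contra
      have := μ.rowLen_anti i a (by omega)
      omega
    simp only [Prod.mk.injEq]
    omega


lemma card_eq_card_add_one_of_innerCorner_outerCorner {Inn Outn : Finset (ℕ × ℕ)}
    (hInn : ∀ c, c ∈ Inn ↔ IsInnerCorner μ c) (hOut : ∀ c, c ∈ Outn ↔ IsOuterCorner μ c) :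
    #Inn = #Outn + 1 := by
  have h0 : (0, μ.rowLen 0) ∈ Inn :=
    (hInn _).mpr ((μ.isInnerCorner_iff_rowLen 0 _).mpr ⟨rfl, Or.inl rfl⟩)
  rw [← Finset.card_erase_add_one h0]
  congr 1
  refine Finset.card_nbij' (fun c => (c.1, μ.rowLen (c.1 - 1))) (fun c => (c.1, μ.rowLen c.1))
    ?_ ?_ ?_ ?_ <;>
  simp only [Set.MapsTo, Set.LeftInvOn, Finset.coe_erase, Set.mem_sdiff, Finset.mem_coe,
    Set.mem_singleton_iff, Prod.forall, hInn, hOut, isInnerCorner_iff_rowLen,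
    isOuterCorner_iff_rowLen, Prod.mk.injEq] <;>
  grind

end YoungDiagram

/-- For a Young diagram `λ`, if the monomials `z_c` for `c ∈ In(λ) ∪ Out(λ)` are pairwise
distinct, then `∑_{c ∈ In(λ)} f_{λ,c} = 1`, where
`f_{λ,c} = ∏_{d ∈ Out(λ)}(z_c - z_d) / ∏_{e ∈ In(λ), e ≠ c}(z_c - z_e)`. -/
theorem sum_f_lambda_c_eq_one (μ : YoungDiagram) (Inn Outn : Finset (ℕ × ℕ))
    (hInn : ∀ c, c ∈ Inn ↔ IsInnerCorner μ c)
    (hOut : ∀ c, c ∈ Outn ↔ IsOuterCorner μ c)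
    (hdist : Set.InjOn zbox ↑(Inn ∪ Outn)) :
    ∑ c ∈ Inn, (∏ d ∈ Outn, (zbox c - zbox d)) / (∏ e ∈ Inn.erase c, (zbox c - zbox e))
      = 1 :=
  sum_prod_sub_div_prod_erase_sub_eq_one (hdist.mono (by simp))
    (μ.card_eq_card_add_one_of_innerCorner_outerCorner hInn hOut)
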